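/- Let Y be a functional extension of X, endowed with the S-topology. Then Y is zero-dimensional (the sets *A form a clopen basis), and Y is Hausdorff if and only if Y is T0; moreover, if Y is T0 then Y is totally separated (any two distinct points are separated by a clopen set of the form *A). -/
import Mathlib


attribute [local instance] Classical.propDecidable

/-- A functional extension of `X`: a proper superset `Y ⊇ X` (given via an injective,
non-surjective inclusion) with two designated distinct elements `0, 1 ∈ X`, together with
a distinguished extension `star f : Y → Y` of every `f : X → X`, preserving compositions
and equalizers, and with directed Puritz preorder. -/
structure FunctionalExtension (X Y : Type*) where
  zero : X
  one : X
  zero_ne_one : zero ≠ one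
  incl : X → Y
  incl_injective : Function.Injective incl
  proper : ¬ Function.Surjective incl
  star : (X → X) → Y → Y
  star_incl : ∀ (f : X → X) (x : X), star f (incl x) = incl (f x)
  comp : ∀ f g : X → X, star (g ∘ f) = star g ∘ star f
  equ : ∀ f g : X → X,
    star (fun x => if f x = g x then one else zero) =
      fun ξ => if star f ξ = star g ξ then incl one else incl zero
  dir : ∀ ξ η : Y, ∃ (p₁ p₂ : X → X) (ζ : Y), star p₁ ζ = ξ ∧ star p₂ ζ = η

namespace FunctionalExtension

variable {X Y : Type*}

/-- The star-extension `*A ⊆ Y` of a subset `A ⊆ X`: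
the set where the extension of the characteristic function of `A` takes the value `1`. -/
def sets (E : FunctionalExtension X Y) (A : Set X) : Set Y :=
  {ξ | E.star (fun x => if x ∈ A then E.one else E.zero) ξ = E.incl E.one}

/-- The S-topology on `Y`: the topology with basis `{*A : A ⊆ X}`. -/
def sTopology (E : FunctionalExtension X Y) : TopologicalSpace Y :=
  TopologicalSpace.generateFrom (Set.range E.sets)

end FunctionalExtension

namespace FunctionalExtension

variable {X Y : Type*}

variable (E : FunctionalExtension X Y)

/-- characteristic function, elaborated exactly as in `sets`. -/
noncomputable def chi (A : Set X) : X → X := fun x => if x ∈ A then E.one else E.zero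

lemma one_ne_zero' : E.one ≠ E.zero := fun h => E.zero_ne_one h.symm

lemma chi_pos {A : Set X} {x : X} (h : x ∈ A) : E.chi A x = E.one := if_pos h
lemma chi_neg {A : Set X} {x : X} (h : x ∉ A) : E.chi A x = E.zero := if_neg h

lemma mem_sets {A : Set X} {ξ : Y} :
    ξ ∈ E.sets A ↔ E.star (E.chi A) ξ = E.incl E.one :=
  Iff.rfl

lemma star_id : E.star id = id := by
  funext ξ
  obtain ⟨p, q, ζ, h, -⟩ := E.dir ξ ξ
  have h2 := congrFun (E.comp p id) ζ
  rw [Function.id_comp] at h2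
  simp only [Function.comp_apply] at h2
  simp only [id_eq, ← h, ← h2]

lemma star_const_one : E.star (fun _ => E.one) = fun _ => E.incl E.one := by
  have h := E.equ id id
  have hf : (fun x : X => if id x = id x then E.one else E.zero) = fun _ => E.one := by
    funext x; rw [if_pos rfl]
  rw [hf] at h
  funext ξ
  rw [h]
  show (if E.star id ξ = E.star id ξ then E.incl E.one else E.incl E.zero) = E.incl E.one
  rw [if_pos rfl]

lemma star_const (a : X) (ξ : Y) : E.star (fun _ => a) ξ = E.incl a := by
  have h := congrFun (E.comp (fun _ => E.one) (fun _ => a)) ξ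
  have he : ((fun _ : X => a) ∘ fun _ : X => E.one) = fun _ : X => a := rfl
  rw [he] at h
  rw [h, Function.comp_apply, E.star_const_one, E.star_incl]

lemma mem_sets_eq (f g : X → X) (ξ : Y) :
    ξ ∈ E.sets {x | f x = g x} ↔ E.star f ξ = E.star g ξ := by
  have h := congrFun (E.equ f g) ξ
  have hfun : E.chi {x | f x = g x} = (fun x => if f x = g x then E.one else E.zero) := rfl
  rw [E.mem_sets, hfun, h]
  constructor
  · intro hh
    by_contra hne
    rw [if_neg hne] at hh
    exact E.zero_ne_one (E.incl_injective hh)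
  · intro hh; rw [if_pos hh]

lemma incl_zero_ne_incl_one : E.incl E.zero ≠ E.incl E.one :=
  fun h => E.zero_ne_one (E.incl_injective h)

lemma star_chi_dichot (A : Set X) (ξ : Y) :
    E.star (E.chi A) ξ = E.incl E.one ∨ E.star (E.chi A) ξ = E.incl E.zero := by
  have h := congrFun (E.equ (E.chi A) (fun _ => E.one)) ξ
  have hf : (fun x => if E.chi A x = (fun _ : X => E.one) x then E.one else E.zero)
      = E.chi A := by
    funext x
    by_cases hx : x ∈ A
    · rw [E.chi_pos hx]; exact if_pos rfl
    · rw [E.chi_neg hx]; exact if_neg E.zero_ne_one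
  rw [hf, E.star_const] at h
  by_cases hc : E.star (E.chi A) ξ = E.incl E.one
  · exact Or.inl hc
  · right; rw [h, if_neg hc]

lemma not_mem_sets (A : Set X) (ξ : Y) :
    ξ ∉ E.sets A ↔ E.star (E.chi A) ξ = E.incl E.zero := by
  constructor
  · intro h
    rcases E.star_chi_dichot A ξ with h1 | h1
    · exact absurd (E.mem_sets.mpr h1) h
    · exact h1
  · intro h hmem
    rw [E.mem_sets] at hmem
    exact E.incl_zero_ne_incl_one (h ▸ hmem)

lemma sets_compl (A : Set X) : E.sets Aᶜ = (E.sets A)ᶜ := by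
  ext ξ
  have hset : (Aᶜ : Set X) = {x | E.chi A x = (fun _ : X => E.zero) x} := by
    ext x
    simp only [Set.mem_compl_iff, Set.mem_setOf_eq]
    by_cases hx : x ∈ A
    · rw [E.chi_pos hx]; simp [hx, E.one_ne_zero']
    · rw [E.chi_neg hx]; simp [hx]
  rw [hset, E.mem_sets_eq, E.star_const]
  simp only [Set.mem_compl_iff]
  exact (E.not_mem_sets A ξ).symm

lemma sets_univ : E.sets Set.univ = Set.univ := by
  ext ξ
  simp only [Set.mem_univ, iff_true]
  have h := (E.mem_sets_eq id id ξ).mpr rfl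
  have hset : ({x : X | id x = id x} : Set X) = Set.univ := by ext x; simp
  rwa [hset] at h

lemma sets_empty : E.sets ∅ = ∅ := by
  have hset : (∅ : Set X) = {x | (fun _ : X => E.zero) x = (fun _ : X => E.one) x} := by
    ext x; simp [E.zero_ne_one]
  ext ξ
  simp only [Set.mem_empty_iff_false, iff_false]
  intro hmem
  rw [hset] at hmem
  rw [E.mem_sets_eq, E.star_const, E.star_const] at hmem
  exact E.incl_zero_ne_incl_one hmem

lemma mem_sets_singleton (a : X) (ξ : Y) : ξ ∈ E.sets {a} ↔ ξ = E.incl a := by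
  have hset : ({a} : Set X) = {x | id x = (fun _ : X => a) x} := by
    ext x; simp
  rw [hset, E.mem_sets_eq, E.star_const, E.star_id]
  simp

lemma inter_mem_sets {A B : Set X} {ξ : Y} (hA : ξ ∈ E.sets A) (hB : ξ ∈ E.sets B) :
    ξ ∈ E.sets (A ∩ B) := by
  by_cases hAu : A = Set.univ
  · subst hAu
    rwa [Set.univ_inter]
  · obtain ⟨a₀, ha₀⟩ : ∃ a₀, a₀ ∉ A := by
      by_contra h
      push_neg at h
      exact hAu (Set.eq_univ_of_forall h)
    set g : X → X := fun x => if x ∈ B then x else a₀ with hg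
    -- χ_{A∩B} = χ_A ∘ g
    have hcomp : E.chi (A ∩ B) = E.chi A ∘ g := by
      funext x
      by_cases hxB : x ∈ B
      · by_cases hxA : x ∈ A
        · rw [E.chi_pos (Set.mem_inter hxA hxB)]
          simp only [Function.comp_apply, hg, if_pos hxB, E.chi_pos hxA]
        · rw [E.chi_neg (fun hc => hxA hc.1)]
          simp only [Function.comp_apply, hg, if_pos hxB, E.chi_neg hxA]
      · rw [E.chi_neg (fun hc => hxB hc.2)]
        simp only [Function.comp_apply, hg, if_neg hxB, E.chi_neg ha₀]
    -- eq(g, id) = B ∪ {a₀}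
    have heq : (B ∪ {a₀} : Set X) = {x | g x = id x} := by
      ext x
      simp only [Set.mem_union, Set.mem_singleton_iff, Set.mem_setOf_eq, id_eq, hg]
      by_cases hxB : x ∈ B
      · simp [hxB]
      · simp [hxB, eq_comm]
    -- ξ ∈ *(B ∪ {a₀})
    have hmem : ξ ∈ E.sets (B ∪ {a₀}) := by
      by_cases ha₀B : a₀ ∈ B
      · have hBu : (B ∪ {a₀} : Set X) = B := by
          rw [Set.union_eq_self_of_subset_right]
          simpa using ha₀B
        rwa [hBu]
      · -- B ∪ {a₀} = (eq(χ_B, χ_{a₀}))ᶜ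
        have hset2 : (B ∪ {a₀} : Set X) =
            {x | E.chi B x = E.chi ({a₀} : Set X) x}ᶜ := by
          ext x
          simp only [Set.mem_union, Set.mem_singleton_iff, Set.mem_compl_iff,
            Set.mem_setOf_eq]
          by_cases hxB : x ∈ B
          · have hxa : x ≠ a₀ := fun h => ha₀B (h ▸ hxB)
            rw [E.chi_pos hxB, E.chi_neg (by simpa using hxa)]
            simp [hxB, E.one_ne_zero']
          · by_cases hxa : x = a₀
            · rw [E.chi_neg hxB, E.chi_pos (by simpa using hxa)]
              simp [hxB, hxa, E.zero_ne_one]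
            · rw [E.chi_neg hxB, E.chi_neg (by simpa using hxa)]
              simp [hxB, hxa]
        rw [hset2, E.sets_compl, Set.mem_compl_iff, E.mem_sets_eq]
        intro hcontra
        have hB' : E.star (E.chi B) ξ = E.incl E.one := E.mem_sets.mp hB
        rw [hB'] at hcontra
        have hξ : ξ ∈ E.sets {a₀} := E.mem_sets.mpr hcontra.symm
        rw [E.mem_sets_singleton] at hξ
        subst hξ
        rw [E.star_incl] at hB'
        have h1 : E.chi B a₀ = E.one := E.incl_injective hB'
        rw [E.chi_neg ha₀B] at h1
        exact E.zero_ne_one h1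
    -- hence star g ξ = ξ
    have hfix : E.star g ξ = ξ := by
      rw [heq, E.mem_sets_eq, E.star_id] at hmem
      exact hmem
    rw [E.mem_sets, hcomp, E.comp, Function.comp_apply, hfix]
    exact E.mem_sets.mp hA

lemma sets_inter (A B : Set X) : E.sets (A ∩ B) = E.sets A ∩ E.sets B := by
  ext ξ
  constructor
  · intro h
    constructor
    · by_contra hA
      rw [← Set.mem_compl_iff, ← E.sets_compl] at hA
      have hx := E.inter_mem_sets h hA
      have h0 : (A ∩ B) ∩ Aᶜ = (∅ : Set X) := by
        rw [Set.inter_comm A B, Set.inter_assoc, Set.inter_compl_self, Set.inter_empty]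
      rw [h0, E.sets_empty] at hx
      exact hx
    · by_contra hB
      rw [← Set.mem_compl_iff, ← E.sets_compl] at hB
      have hx := E.inter_mem_sets h hB
      have h0 : (A ∩ B) ∩ Bᶜ = (∅ : Set X) := by
        rw [Set.inter_assoc, Set.inter_compl_self, Set.inter_empty]
      rw [h0, E.sets_empty] at hx
      exact hx
  · rintro ⟨hA, hB⟩
    exact E.inter_mem_sets hA hB

end FunctionalExtension
namespace FunctionalExtension

variable {X Y : Type*} (E : FunctionalExtension X Y)

lemma isBasis : @TopologicalSpace.IsTopologicalBasis Y E.sTopology (Set.range E.sets) := by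
  letI := E.sTopology
  refine ⟨?_, ?_, rfl⟩
  · rintro t₁ ⟨A, rfl⟩ t₂ ⟨B, rfl⟩ ξ hξ
    exact ⟨E.sets (A ∩ B), ⟨A ∩ B, rfl⟩, by rw [E.sets_inter]; exact hξ,
      by rw [E.sets_inter]⟩
  · apply Set.eq_univ_of_univ_subset
    intro ξ _
    exact Set.mem_sUnion.mpr ⟨E.sets Set.univ, ⟨Set.univ, rfl⟩, by rw [E.sets_univ]; trivial⟩

lemma isClopen_sets (A : Set X) : @IsClopen Y E.sTopology (E.sets A) := by
  letI := E.sTopology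
  refine ⟨?_, E.isBasis.isOpen ⟨A, rfl⟩⟩
  rw [← isOpen_compl_iff, ← E.sets_compl]
  exact E.isBasis.isOpen ⟨Aᶜ, rfl⟩

lemma sep_of_t0 (h0 : @T0Space Y E.sTopology) :
    ∀ ξ η : Y, ξ ≠ η → ∃ A : Set X, ξ ∈ E.sets A ∧ η ∉ E.sets A := by
  letI := E.sTopology
  intro ξ η hne
  have hni : ¬ Inseparable ξ η := fun h => hne (h0.t0 h)
  rw [inseparable_iff_forall_isOpen] at hni
  push_neg at hni
  obtain ⟨U, hU, hxor⟩ := hni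
  rcases hxor with ⟨hξ, hη⟩ | ⟨hξ, hη⟩
  · obtain ⟨t, ⟨A, rfl⟩, hmem, hsub⟩ := E.isBasis.exists_subset_of_mem_open hξ hU
    exact ⟨A, hmem, fun h => hη (hsub h)⟩
  · obtain ⟨t, ⟨A, rfl⟩, hmem, hsub⟩ := E.isBasis.exists_subset_of_mem_open hη hU
    refine ⟨Aᶜ, ?_, ?_⟩
    · rw [E.sets_compl]
      exact fun h => hξ (hsub h)
    · rw [E.sets_compl]
      simpa using hmem

end FunctionalExtension


/-- With the S-topology, `Y` is zero-dimensional (the sets `*A` form a clopen basis);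
`Y` is Hausdorff iff it is T0; and if `Y` is T0 then it is totally separated, any two
distinct points being separated by a clopen set of the form `*A`. -/
theorem stmt7 {X Y : Type*} (E : FunctionalExtension X Y) :
    @TopologicalSpace.IsTopologicalBasis Y E.sTopology (Set.range E.sets) ∧
    (∀ A : Set X, @IsClopen Y E.sTopology (E.sets A)) ∧
    (@T2Space Y E.sTopology ↔ @T0Space Y E.sTopology) ∧
    (@T0Space Y E.sTopology →
      @TotallySeparatedSpace Y E.sTopology ∧
      ∀ ξ η : Y, ξ ≠ η → ∃ A : Set X, ξ ∈ E.sets A ∧ η ∉ E.sets A) := by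
  letI := E.sTopology
  refine ⟨E.isBasis, E.isClopen_sets, ⟨fun _ => inferInstance, fun h0 => ?_⟩, fun h0 => ?_⟩
  · constructor
    intro ξ η hne
    obtain ⟨A, hξ, hη⟩ := E.sep_of_t0 h0 ξ η hne
    refine ⟨E.sets A, (E.sets A)ᶜ, (E.isClopen_sets A).2, ?_, hξ, hη, disjoint_compl_right⟩
    rw [← E.sets_compl]
    exact (E.isClopen_sets Aᶜ).2
  · refine ⟨⟨?_⟩, E.sep_of_t0 h0⟩
    intro ξ _ η _ hne
    obtain ⟨A, hξ, hη⟩ := E.sep_of_t0 h0 ξ η hne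
    refine ⟨E.sets A, (E.sets A)ᶜ, (E.isClopen_sets A).2, ?_, hξ, hη, ?_, disjoint_compl_right⟩
    · rw [← E.sets_compl]
      exact (E.isClopen_sets Aᶜ).2
    · rw [Set.union_compl_self]
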